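/- arXiv:1803.09643 — 9 statements merged into one kernel-verified Lean document; each statement's English description precedes it below -/
import Mathlib

section
/- Let X be a set and suppose 𝓛 and 𝓡 are two nests on X. Then 𝓛 ∪ 𝓡 T₁-separates X if and only if both 𝓛 and 𝓡 T₀-separate X and the relation ⊲_𝓛 equals the converse of the relation ⊲_𝓡 (i.e., x ⊲_𝓛 y iff y ⊲_𝓡 x, for all x, y ∈ X). -/
/-- A nest on `X`: a family of subsets linearly ordered by inclusion. -/
def IsNest {X : Type*} (𝓛 : Set (Set X)) : Prop :=
  ∀ M ∈ 𝓛, ∀ N ∈ 𝓛, M ⊆ N ∨ N ⊆ M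

/-- The relation `⊲_𝓛` induced by a nest. -/
def NestLT {X : Type*} (𝓛 : Set (Set X)) (x y : X) : Prop :=
  ∃ L ∈ 𝓛, x ∈ L ∧ y ∉ L

/-- `𝓛` T₀-separates `X`. -/
def T0Sep {X : Type*} (𝓛 : Set (Set X)) : Prop :=
  ∀ x y : X, x ≠ y → ∃ L ∈ 𝓛, (x ∈ L ∧ y ∉ L) ∨ (y ∈ L ∧ x ∉ L)

/-- `𝓢` T₁-separates `X`. -/
def T1Sep {X : Type*} (𝓢 : Set (Set X)) : Prop :=
  ∀ x y : X, x ≠ y → ∃ L ∈ 𝓢, ∃ L' ∈ 𝓢, (x ∈ L ∧ y ∉ L) ∧ (y ∈ L' ∧ x ∉ L')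

theorem t1Sep_union_iff {X : Type*} (𝓛 𝓡 : Set (Set X))
    (h𝓛 : IsNest 𝓛) (h𝓡 : IsNest 𝓡) :
    T1Sep (𝓛 ∪ 𝓡) ↔
      T0Sep 𝓛 ∧ T0Sep 𝓡 ∧ (∀ x y : X, NestLT 𝓛 x y ↔ NestLT 𝓡 y x) := by
  constructor
  · intro h
    -- helper: two incomparable sets can't both be in the same nest
    have incomp : ∀ (𝓝 : Set (Set X)), IsNest 𝓝 → ∀ A B : Set X,
        ∀ x y : X, x ∈ A → x ∉ B → y ∈ B → y ∉ A → A ∈ 𝓝 → B ∉ 𝓝 := by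
      intro 𝓝 hN A B x y hxA hxB hyB hyA hA hB
      rcases hN A hA B hB with hsub | hsub
      · exact hxB (hsub hxA)
      · exact hyA (hsub hyB)
    refine ⟨?_, ?_, ?_⟩
    · intro x y hxy
      obtain ⟨A, hA, B, hB, ⟨hxA, hyA⟩, ⟨hyB, hxB⟩⟩ := h x y hxy
      rcases hA with hA | hA
      · exact ⟨A, hA, Or.inl ⟨hxA, hyA⟩⟩
      · rcases hB with hB | hB
        · exact ⟨B, hB, Or.inr ⟨hyB, hxB⟩⟩
        · exact absurd hB (incomp 𝓡 h𝓡 A B x y hxA hxB hyB hyA hA)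
    · intro x y hxy
      obtain ⟨A, hA, B, hB, ⟨hxA, hyA⟩, ⟨hyB, hxB⟩⟩ := h x y hxy
      rcases hA with hA | hA
      · rcases hB with hB | hB
        · exact absurd hB (incomp 𝓛 h𝓛 A B x y hxA hxB hyB hyA hA)
        · exact ⟨B, hB, Or.inr ⟨hyB, hxB⟩⟩
      · exact ⟨A, hA, Or.inl ⟨hxA, hyA⟩⟩
    · intro x y
      constructor
      · rintro ⟨L, hL, hxL, hyL⟩
        have hxy : x ≠ y := fun e => hyL (e ▸ hxL)
        obtain ⟨A, hA, B, hB, ⟨hxA, hyA⟩, ⟨hyB, hxB⟩⟩ := h x y hxy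
        rcases hB with hB | hB
        · exact absurd hB (incomp 𝓛 h𝓛 L B x y hxL hxB hyB hyL hL)
        · exact ⟨B, hB, hyB, hxB⟩
      · rintro ⟨R, hR, hyR, hxR⟩
        have hxy : x ≠ y := fun e => hxR (e ▸ hyR)
        obtain ⟨A, hA, B, hB, ⟨hxA, hyA⟩, ⟨hyB, hxB⟩⟩ := h x y hxy
        rcases hA with hA | hA
        · exact ⟨A, hA, hxA, hyA⟩
        · exact absurd hA (incomp 𝓡 h𝓡 R A y x hyR hyA hxA hxR hR)
  · rintro ⟨h0L, _h0R, hrel⟩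
    intro x y hxy
    obtain ⟨L, hL, hcase⟩ := h0L x y hxy
    rcases hcase with ⟨hxL, hyL⟩ | ⟨hyL, hxL⟩
    · obtain ⟨R, hR, hyR, hxR⟩ := (hrel x y).mp ⟨L, hL, hxL, hyL⟩
      exact ⟨L, Or.inl hL, R, Or.inr hR, ⟨hxL, hyL⟩, ⟨hyR, hxR⟩⟩
    · obtain ⟨R, hR, hxR, hyR⟩ := (hrel y x).mp ⟨L, hL, hyL, hxL⟩
      exact ⟨R, Or.inr hR, L, Or.inl hL, ⟨hxR, hyR⟩, ⟨hyL, hxL⟩⟩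
end

section
/- Let X be a set and 𝓛 a T₀-separating nest on X. The following are equivalent: (1) 𝓛 is interlocking; (2) for each L ∈ 𝓛, if L has a ⊲_𝓛-maximal element then X − L has a ⊲_𝓛-minimal element; (3) for each L ∈ 𝓛, either L has no ⊲_𝓛-maximal element or X − L has a ⊲_𝓛-minimal element. -/
/-- `𝓛` is interlocking. -/
def Interlocking {X : Type*} (𝓛 : Set (Set X)) : Prop :=
  ∀ L ∈ 𝓛, L = ⋂₀ {N | N ∈ 𝓛 ∧ L ⊆ N ∧ L ≠ N} →
    L = ⋃₀ {N | N ∈ 𝓛 ∧ N ⊆ L ∧ L ≠ N}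

/-- `A` has a `⊲_𝓛`-maximal element. -/
def HasNestMax {X : Type*} (𝓛 : Set (Set X)) (A : Set X) : Prop :=
  ∃ m ∈ A, ∀ x ∈ A, ¬ NestLT 𝓛 m x

/-- `A` has a `⊲_𝓛`-minimal element. -/
def HasNestMin {X : Type*} (𝓛 : Set (Set X)) (A : Set X) : Prop :=
  ∃ m ∈ A, ∀ x ∈ A, ¬ NestLT 𝓛 x m

theorem interlocking_tfae {X : Type*} (𝓛 : Set (Set X))
    (h𝓛 : IsNest 𝓛) (hT0 : T0Sep 𝓛) :
    (Interlocking 𝓛 ↔ ∀ L ∈ 𝓛, HasNestMax 𝓛 L → HasNestMin 𝓛 Lᶜ) ∧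
    (Interlocking 𝓛 ↔ ∀ L ∈ 𝓛, ¬ HasNestMax 𝓛 L ∨ HasNestMin 𝓛 Lᶜ) := by
  have key : Interlocking 𝓛 ↔ ∀ L ∈ 𝓛, HasNestMax 𝓛 L → HasNestMin 𝓛 Lᶜ := by
    constructor
    · rintro hIL L hL ⟨m, hmL, hmax⟩
      by_cases hI : L = ⋂₀ {N | N ∈ 𝓛 ∧ L ⊆ N ∧ L ≠ N}
      · -- then L is the union of its strict subsets, contradicting maximality of m
        have hU := hIL L hL hI
        have hm' : m ∈ ⋃₀ {N | N ∈ 𝓛 ∧ N ⊆ L ∧ L ≠ N} := hU ▸ hmL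
        obtain ⟨N, ⟨hN𝓛, hNL, hne⟩, hmN⟩ := hm'
        have hy : ∃ y, y ∈ L ∧ y ∉ N := by
          by_contra h
          push_neg at h
          exact hne (Set.Subset.antisymm (fun a ha => h a ha) hNL)
        obtain ⟨y, hyL, hyN⟩ := hy
        exact absurd ⟨N, hN𝓛, hmN, hyN⟩ (hmax y hyL)
      · -- pick z in the intersection but not in L; it is minimal in Lᶜ
        have hLsub : L ⊆ ⋂₀ {N | N ∈ 𝓛 ∧ L ⊆ N ∧ L ≠ N} := by
          intro a ha N hN
          exact hN.2.1 ha
        have hnsub : ¬ (⋂₀ {N | N ∈ 𝓛 ∧ L ⊆ N ∧ L ≠ N} ⊆ L) := by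
          intro h
          exact hI (Set.Subset.antisymm hLsub h)
        obtain ⟨z, hzI, hzL⟩ := Set.not_subset.mp hnsub
        refine ⟨z, hzL, fun w hw hwz => ?_⟩
        obtain ⟨M, hM𝓛, hwM, hzM⟩ := hwz
        have hLM : L ⊆ M := by
          rcases h𝓛 M hM𝓛 L hL with h | h
          · exact absurd (h hwM) hw
          · exact h
        have hLneM : L ≠ M := by
          rintro rfl
          exact hw hwM
        exact hzM (hzI M ⟨hM𝓛, hLM, hLneM⟩)
    · intro h2 L hL hI
      apply Set.Subset.antisymm
      · intro x hx
        by_contra hx'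
        -- x is in no strict subset of L from 𝓛, so x is ⊲-maximal in L
        have hmax : ∀ y ∈ L, ¬ NestLT 𝓛 x y := by
          rintro y hyL ⟨M, hM𝓛, hxM, hyM⟩
          have hML : M ⊆ L := by
            rcases h𝓛 M hM𝓛 L hL with h | h
            · exact h
            · exact absurd (h hyL) hyM
          have hne : L ≠ M := by
            rintro rfl
            exact hyM hyL
          exact hx' ⟨M, ⟨hM𝓛, hML, hne⟩, hxM⟩
        obtain ⟨z, hzc, hzmin⟩ := h2 L hL ⟨x, hx, hmax⟩
        -- z lies in every strict superset of L, hence in ⋂ = L, contradiction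
        have hzI : z ∈ ⋂₀ {N | N ∈ 𝓛 ∧ L ⊆ N ∧ L ≠ N} := by
          rintro N ⟨hN𝓛, hLN, hne⟩
          by_contra hzN
          obtain ⟨w, hwN, hwL⟩ := Set.not_subset.mp (fun h => hne (Set.Subset.antisymm hLN h))
          exact hzmin w hwL ⟨N, hN𝓛, hwN, hzN⟩
        exact hzc (hI ▸ hzI)
      · intro x hx
        obtain ⟨N, ⟨_, hNL, _⟩, hxN⟩ := hx
        exact hNL hxN
  refine ⟨key, key.trans ?_⟩
  constructor
  · intro h L hL
    exact (imp_iff_not_or).mp (h L hL)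
  · intro h L hL
    exact (imp_iff_not_or).mpr (h L hL)
end

section
/- Let (X, 𝒯) be a topological space and let 𝓛 and 𝓡 be two nests of open subsets of X whose union T₁-separates X. Then every set that is open in the ⊲_𝓛-order topology on X is open in (X, 𝒯). -/
open Topology

/-- The order topology of a relation `R`: generated by the rays
`{x | R x a}` and `{x | R a x}`, `a ∈ X`. -/
def orderTopologyOf {X : Type*} (R : X → X → Prop) : TopologicalSpace X :=
  TopologicalSpace.generateFrom
    ({S | ∃ a, S = {x | R x a}} ∪ {S | ∃ a, S = {x | R a x}})

theorem orderOpen_is_open {X : Type*} (t : TopologicalSpace X)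
    (𝓛 𝓡 : Set (Set X)) (h𝓛 : IsNest 𝓛) (h𝓡 : IsNest 𝓡)
    (hopen : ∀ L ∈ 𝓛 ∪ 𝓡, IsOpen[t] L) (hT1 : T1Sep (𝓛 ∪ 𝓡)) :
    ∀ U : Set X, IsOpen[orderTopologyOf (NestLT 𝓛)] U → IsOpen[t] U := by
  letI : TopologicalSpace X := t
  intro U hU
  induction hU with
  | univ => exact isOpen_univ
  | inter S T _ _ ihS ihT => exact ihS.inter ihT
  | sUnion 𝒮 _ ih => exact isOpen_sUnion ih
  | basic S hS =>
    rcases hS with ⟨a, rfl⟩ | ⟨a, rfl⟩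
    · -- left ray {x | x ⊲ a} is a union of nest members
      have : {x | NestLT 𝓛 x a} = ⋃ L ∈ {L ∈ 𝓛 | a ∉ L}, L := by
        ext x
        simp only [Set.mem_setOf_eq, NestLT, Set.mem_iUnion]
        tauto
      rw [this]
      exact isOpen_biUnion fun L hL => hopen L (Or.inl hL.1)
    · -- right ray {x | a ⊲ x}
      rw [isOpen_iff_forall_mem_open]
      rintro x ⟨L₀, hL₀, haL₀, hxL₀⟩
      -- every member of 𝓛 containing x contains a
      have step1 : ∀ L ∈ 𝓛, x ∈ L → a ∈ L := by
        intro L hL hxL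
        by_contra haL
        rcases h𝓛 L hL L₀ hL₀ with h | h
        · exact hxL₀ (h hxL)
        · exact haL (h haL₀)
      have hxa : x ≠ a := fun h => hxL₀ (h ▸ haL₀)
      obtain ⟨M, hM, _, _, ⟨hxM, haM⟩, -⟩ := hT1 x a hxa
      have hMR : M ∈ 𝓡 := by
        rcases hM with h | h
        · exact absurd (step1 M h hxM) haM
        · exact h
      refine ⟨M, ?_, hopen M (Or.inr hMR), hxM⟩
      intro y hyM
      by_contra hy
      have hy' : ∀ L ∈ 𝓛, a ∈ L → y ∈ L := by
        intro L hL haL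
        by_contra hyL
        exact hy ⟨L, hL, haL, hyL⟩
      have hay : a ≠ y := fun h => haM (h ▸ hyM)
      obtain ⟨N, hN, _, _, ⟨haN, hyN⟩, -⟩ := hT1 a y hay
      have hNR : N ∈ 𝓡 := by
        rcases hN with h | h
        · exact absurd (hy' N h haN) hyN
        · exact h
      rcases h𝓡 M hMR N hNR with h | h
      · exact hyN (h hyM)
      · exact haM (h haN)
end

section
/- A topological space (X, 𝒯) is a LOTS (i.e., there exists a linear order < on X whose order topology equals 𝒯) if and only if there exist two interlocking nests 𝓛 and 𝓡 of open subsets of X such that 𝓛 ∪ 𝓡 T₁-separates X and 𝓛 ∪ 𝓡 is a subbasis for 𝒯. -/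
open Topology

/-- `(X, t)` is a LOTS: some linear order on `X` induces the topology `t`. -/
def IsLOTS {X : Type*} (t : TopologicalSpace X) : Prop :=
  ∃ _ : LinearOrder X, t = orderTopologyOf (fun a b : X => a < b)

/-!
A nest `𝓡` orders `X`: `x` precedes `y` when some member of `𝓡` contains `y` but not `x`.
Nestedness makes this relation transitive, T₁-separation by `𝓛 ∪ 𝓡` makes it total and shows
that `𝓛` induces the reverse order. Rays of the order are unions of members of `𝓛 ∪ 𝓡`, and
interlocking is exactly what makes each member of `𝓡` (an up-set) a union of open rays.
Conversely, the rays of a linear order form two nests, interlocking because no ray `(←, a)` is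
the intersection of the strictly larger rays, all of which contain `a`.
-/

open Set TopologicalSpace

lemma isNest_range_of_monotone {α X : Type*} [LinearOrder α] {f : α → Set X} (hf : Monotone f) :
    IsNest (range f) := by
  rintro _ ⟨a, rfl⟩ _ ⟨b, rfl⟩
  exact (le_total a b).imp (fun h => hf h) (fun h => hf h)

lemma isNest_range_of_antitone {α X : Type*} [LinearOrder α] {f : α → Set X} (hf : Antitone f) :
    IsNest (range f) := by
  rintro _ ⟨a, rfl⟩ _ ⟨b, rfl⟩
  exact (le_total b a).imp (fun h => hf h) (fun h => hf h)

lemma interlocking_of_forall_exists_notMem {X : Type*} {𝓛 : Set (Set X)}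
    (h : ∀ L ∈ 𝓛, ∃ a ∉ L, ∀ N ∈ 𝓛, L ⊂ N → a ∈ N) : Interlocking 𝓛 := by
  intro L hL hInter
  obtain ⟨a, haL, ha⟩ := h L hL
  refine absurd ?_ haL
  rw [hInter]
  exact fun N ⟨hN, hLN, hne⟩ => ha N hN (hLN.ssubset_of_ne hne)

section LinearOrder

variable {X : Type*} [LinearOrder X]

lemma interlocking_range_Iio : Interlocking (range (Iio : X → Set X)) :=
  interlocking_of_forall_exists_notMem fun _ ⟨a, ha⟩ => ⟨a, ha ▸ lt_irrefl a,
    fun _ ⟨_, hb⟩ hab => hb ▸ Iio_ssubset_Iio_iff.1 (ha ▸ hb ▸ hab)⟩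

lemma interlocking_range_Ioi : Interlocking (range (Ioi : X → Set X)) :=
  interlocking_of_forall_exists_notMem fun _ ⟨a, ha⟩ => ⟨a, ha ▸ lt_irrefl a,
    fun _ ⟨_, hb⟩ hab => hb ▸ Ioi_ssubset_Ioi_iff.1 (ha ▸ hb ▸ hab)⟩

lemma t1Sep_range_Iio_union_range_Ioi : T1Sep (range (Iio : X → Set X) ∪ range Ioi) := by
  intro x y hxy
  rcases hxy.lt_or_gt with h | h
  · exact ⟨Iio y, .inl ⟨y, rfl⟩, Ioi x, .inr ⟨x, rfl⟩, ⟨h, lt_irrefl y⟩, h, lt_irrefl x⟩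
  · exact ⟨Ioi y, .inr ⟨y, rfl⟩, Iio x, .inl ⟨x, rfl⟩, ⟨h, lt_irrefl y⟩, h, lt_irrefl x⟩

lemma orderTopologyOf_lt_eq_generateFrom :
    orderTopologyOf (fun a b : X => a < b) = generateFrom (range Iio ∪ range Ioi) := by
  unfold orderTopologyOf
  congr 2 <;> ext S <;> exact exists_congr fun _ => eq_comm

end LinearOrder

section Nests

variable {X : Type*} {𝓛 𝓡 : Set (Set X)}

def nestOrder (𝓡 : Set (Set X)) (x y : X) : Prop :=
  ∃ R ∈ 𝓡, y ∈ R ∧ x ∉ R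

lemma orderTopologyOf_swap (r : X → X → Prop) :
    orderTopologyOf (fun a b => r b a) = orderTopologyOf r := by
  rw [orderTopologyOf, orderTopologyOf, union_comm]

lemma mem_of_nestOrder_of_mem (hR : IsNest 𝓡) {R : Set X} (hRm : R ∈ 𝓡) {x y : X}
    (hxy : nestOrder 𝓡 x y) (hx : x ∈ R) : y ∈ R := by
  obtain ⟨R', hR'm, hy, hx'⟩ := hxy
  exact (hR R hRm R' hR'm).elim (fun h => absurd (h hx) hx') (fun h => h hy)

lemma nestOrder_trans (hR : IsNest 𝓡) {x y z : X} (hxy : nestOrder 𝓡 x y)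
    (hyz : nestOrder 𝓡 y z) : nestOrder 𝓡 x z := by
  obtain ⟨R, hRm, hz, hy⟩ := hyz
  exact ⟨R, hRm, hz, fun hx => hy (mem_of_nestOrder_of_mem hR hRm hxy hx)⟩

lemma nestOrder_swap_of_t1Sep (hL : IsNest 𝓛) (hT1 : T1Sep (𝓛 ∪ 𝓡)) {x y : X}
    (hxy : nestOrder 𝓛 x y) : nestOrder 𝓡 y x := by
  obtain ⟨L, hLm, hy, hx⟩ := hxy
  obtain ⟨S, hS, -, -, ⟨hxS, hyS⟩, -⟩ := hT1 x y fun h => hx (h ▸ hy)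
  refine hS.elim (fun hSm => ?_) (fun hSm => ⟨S, hSm, hxS, hyS⟩)
  exact (hL S hSm L hLm).elim (fun h => absurd (h hxS) hx) (fun h => absurd (h hy) hyS)

lemma nestOrder_swap_eq (hL : IsNest 𝓛) (hR : IsNest 𝓡) (hT1 : T1Sep (𝓛 ∪ 𝓡)) :
    (fun x y => nestOrder 𝓡 y x) = nestOrder 𝓛 := by
  have hT1' : T1Sep (𝓡 ∪ 𝓛) := union_comm 𝓛 𝓡 ▸ hT1
  ext x y
  exact ⟨nestOrder_swap_of_t1Sep hR hT1', nestOrder_swap_of_t1Sep hL hT1⟩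

lemma nestOrder_or_nestOrder_of_ne (hL : IsNest 𝓛) (hT1 : T1Sep (𝓛 ∪ 𝓡)) {x y : X}
    (hxy : x ≠ y) : nestOrder 𝓡 x y ∨ nestOrder 𝓡 y x := by
  obtain ⟨S, hS, -, -, ⟨hxS, hyS⟩, -⟩ := hT1 x y hxy
  exact hS.imp (fun hSm => nestOrder_swap_of_t1Sep hL hT1 ⟨S, hSm, hxS, hyS⟩)
    (fun hSm => ⟨S, hSm, hxS, hyS⟩)

lemma isStrictTotalOrder_nestOrder (hL : IsNest 𝓛) (hR : IsNest 𝓡) (hT1 : T1Sep (𝓛 ∪ 𝓡)) :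
    IsStrictTotalOrder X (nestOrder 𝓡) where
  irrefl _ := fun ⟨_, _, hx, hx'⟩ => hx' hx
  trans _ _ _ := nestOrder_trans hR
  trichotomous x y hxy hyx := by
    by_contra hne
    exact (nestOrder_or_nestOrder_of_ne hL hT1 hne).elim hxy hyx

lemma isOpen_setOf_nestOrder {t : TopologicalSpace X} (h : ∀ R ∈ 𝓡, IsOpen[t] R) (a : X) :
    IsOpen[t] {x | nestOrder 𝓡 a x} := by
  have hunion : {x | nestOrder 𝓡 a x} = ⋃₀ {R | R ∈ 𝓡 ∧ a ∉ R} := by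
    ext x
    simp only [nestOrder, mem_sUnion, mem_ofPred_eq]
    tauto
  rw [hunion]
  exact isOpen_sUnion fun R hR => h R hR.1

lemma isOpen_orderTopologyOf_nestOrder (hR : IsNest 𝓡) (iR : Interlocking 𝓡) {R : Set X}
    (hRm : R ∈ 𝓡) : IsOpen[orderTopologyOf (nestOrder 𝓡)] R := by
  let := orderTopologyOf (nestOrder 𝓡)
  refine isOpen_iff_forall_mem_open.2 fun x hx => ?_
  suffices ∃ a, nestOrder 𝓡 a x ∧ {w | nestOrder 𝓡 a w} ⊆ R from
    let ⟨a, hax, haR⟩ := this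
    ⟨_, haR, isOpen_generateFrom_of_mem (.inr ⟨a, rfl⟩), hax⟩
  -- Either interlocking yields a point of `R` below `x`, or a point lying in every strict
  -- superset of `R` but not in `R` bounds a ray inside `R`.
  by_cases hInter : R = ⋂₀ {N | N ∈ 𝓡 ∧ R ⊆ N ∧ R ≠ N}
  · obtain ⟨N, ⟨hNm, hNR, hne⟩, hxN⟩ := (iR R hRm hInter ▸ hx :)
    obtain ⟨z, hzR, hzN⟩ := not_subset.1 fun h => hne (h.antisymm hNR)
    exact ⟨z, ⟨N, hNm, hxN, hzN⟩, fun w hw => mem_of_nestOrder_of_mem hR hRm hw hzR⟩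
  · obtain ⟨y, hy, hyR⟩ :=
      not_subset.1 fun h => hInter ((subset_sInter fun _ hN => hN.2.1).antisymm h)
    refine ⟨y, ⟨R, hRm, hx, hyR⟩, fun w ⟨N, hNm, hwN, hyN⟩ => ?_⟩
    rcases hR N hNm R hRm with hNR | hRN
    · exact hNR hwN
    · by_cases hNR : R = N
      · exact hNR ▸ hwN
      · exact absurd (hy N ⟨hNm, hRN, hNR⟩) hyN

lemma generateFrom_union_eq_orderTopologyOf_nestOrder (hL : IsNest 𝓛) (hR : IsNest 𝓡)
    (iL : Interlocking 𝓛) (iR : Interlocking 𝓡) (hT1 : T1Sep (𝓛 ∪ 𝓡)) :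
    generateFrom (𝓛 ∪ 𝓡) = orderTopologyOf (nestOrder 𝓡) := by
  have hswap := nestOrder_swap_eq hL hR hT1
  refine le_antisymm (le_generateFrom_iff_subset_isOpen.2 ?_)
    (le_generateFrom_iff_subset_isOpen.2 ?_)
  · rintro S (⟨a, rfl⟩ | ⟨a, rfl⟩)
    · have hray : {x | nestOrder 𝓡 x a} = {x | nestOrder 𝓛 a x} := by rw [← hswap]
      rw [mem_ofPred_eq, hray]
      exact isOpen_setOf_nestOrder (fun L hL => isOpen_generateFrom_of_mem (.inl hL)) a
    · exact isOpen_setOf_nestOrder (fun R hR => isOpen_generateFrom_of_mem (.inr hR)) a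
  · rintro S (hS | hS)
    · rw [mem_ofPred_eq, ← orderTopologyOf_swap, hswap]
      exact isOpen_orderTopologyOf_nestOrder hL iL hS
    · exact isOpen_orderTopologyOf_nestOrder hR iR hS

lemma isLOTS_generateFrom_union (hL : IsNest 𝓛) (hR : IsNest 𝓡) (iL : Interlocking 𝓛)
    (iR : Interlocking 𝓡) (hT1 : T1Sep (𝓛 ∪ 𝓡)) : IsLOTS (generateFrom (𝓛 ∪ 𝓡)) := by
  have := isStrictTotalOrder_nestOrder hL hR hT1
  classical
  exact ⟨linearOrderOfSTO (nestOrder 𝓡),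
    generateFrom_union_eq_orderTopologyOf_nestOrder hL hR iL iR hT1⟩

end Nests

theorem isLOTS_iff_interlocking_nests {X : Type*} (t : TopologicalSpace X) :
    IsLOTS t ↔
      ∃ 𝓛 𝓡 : Set (Set X), IsNest 𝓛 ∧ IsNest 𝓡 ∧
        Interlocking 𝓛 ∧ Interlocking 𝓡 ∧
        (∀ L ∈ 𝓛 ∪ 𝓡, IsOpen[t] L) ∧ T1Sep (𝓛 ∪ 𝓡) ∧
        t = TopologicalSpace.generateFrom (𝓛 ∪ 𝓡) := by
  constructor
  · rintro ⟨_, rfl⟩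
    rw [orderTopologyOf_lt_eq_generateFrom]
    exact ⟨range Iio, range Ioi, isNest_range_of_monotone monotone_Iio,
      isNest_range_of_antitone antitone_Ioi,
      interlocking_range_Iio, interlocking_range_Ioi, fun _ => isOpen_generateFrom_of_mem,
      t1Sep_range_Iio_union_range_Ioi, rfl⟩
  · rintro ⟨𝓛, 𝓡, hL, hR, iL, iR, -, hT1, rfl⟩
    exact isLOTS_generateFrom_union hL hR iL iR hT1
end

section
/- Let X be a set and let 𝓛 and 𝓡 be two interlocking nests on X whose union T₁-separates X. Then the ⊲_𝓛-order topology, the topology generated by 𝓛 ∪ 𝓡 as a subbasis, and the ⊴_𝓛-interval topology coincide; each is contained in the ⊲_𝓛-interval topology; and the ⊲_𝓛-interval topology equals the ⊴_𝓛-order topology. -/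
open Topology

/-- The reflexive relation `⊴_𝓛`. -/
def NestLE {X : Type*} (𝓛 : Set (Set X)) (x y : X) : Prop :=
  x = y ∨ NestLT 𝓛 x y

/-- The interval topology of a relation `R`. -/
def intervalTopologyOf {X : Type*} (R : X → X → Prop) : TopologicalSpace X :=
  TopologicalSpace.generateFrom
    ({S | ∃ a, S = {x | R x a}ᶜ} ∪ {S | ∃ a, S = {x | R a x}ᶜ})

namespace NestAux

open TopologicalSpace

variable {X : Type*} {𝓛 𝓡 : Set (Set X)}

lemma lt_irrefl (𝓛 : Set (Set X)) (x : X) : ¬ NestLT 𝓛 x x := by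
  rintro ⟨L, _, hx, hx'⟩; exact hx' hx

lemma lt_asymm (h𝓛 : IsNest 𝓛) {x y : X} (h : NestLT 𝓛 x y) : ¬ NestLT 𝓛 y x := by
  rintro ⟨M, hM, hyM, hxM⟩
  obtain ⟨L, hL, hxL, hyL⟩ := h
  rcases h𝓛 L hL M hM with hsub | hsub
  · exact hxM (hsub hxL)
  · exact hyL (hsub hyM)

lemma lt_trans (h𝓛 : IsNest 𝓛) {x y z : X} (h1 : NestLT 𝓛 x y) (h2 : NestLT 𝓛 y z) :
    NestLT 𝓛 x z := by
  obtain ⟨L, hL, hxL, hyL⟩ := h1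
  obtain ⟨M, hM, hyM, hzM⟩ := h2
  rcases h𝓛 L hL M hM with hsub | hsub
  · exact ⟨M, hM, hsub hxL, hzM⟩
  · exact absurd (hsub hyM) hyL

lemma lt_trich (h𝓡 : IsNest 𝓡) (hT1 : T1Sep (𝓛 ∪ 𝓡)) {x y : X} (hxy : x ≠ y) :
    NestLT 𝓛 x y ∨ NestLT 𝓛 y x := by
  obtain ⟨S, hS, S', hS', ⟨hxS, hyS⟩, hyS', hxS'⟩ := hT1 x y hxy
  rcases hS with h | h
  · exact Or.inl ⟨S, h, hxS, hyS⟩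
  rcases hS' with h' | h'
  · exact Or.inr ⟨S', h', hyS', hxS'⟩
  rcases h𝓡 S h S' h' with hsub | hsub
  · exact absurd (hsub hxS) hxS'
  · exact absurd (hsub hyS') hyS

lemma compl_le_left (h𝓛 : IsNest 𝓛) (h𝓡 : IsNest 𝓡) (hT1 : T1Sep (𝓛 ∪ 𝓡)) (a : X) :
    {x | NestLE 𝓛 x a}ᶜ = {x | NestLT 𝓛 a x} := by
  ext x
  simp only [Set.mem_compl_iff, Set.mem_setOf_eq, NestLE]
  constructor
  · intro h
    push_neg at h
    rcases lt_trich h𝓡 hT1 h.1 with h' | h'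
    · exact absurd h' h.2
    · exact h'
  · intro h
    push_neg
    refine ⟨?_, ?_⟩
    · rintro rfl; exact lt_irrefl _ _ h
    · exact lt_asymm h𝓛 h

lemma compl_le_right (h𝓛 : IsNest 𝓛) (h𝓡 : IsNest 𝓡) (hT1 : T1Sep (𝓛 ∪ 𝓡)) (a : X) :
    {x | NestLE 𝓛 a x}ᶜ = {x | NestLT 𝓛 x a} := by
  ext x
  simp only [Set.mem_compl_iff, Set.mem_setOf_eq, NestLE]
  constructor
  · intro h
    push_neg at h
    rcases lt_trich h𝓡 hT1 (Ne.symm h.1) with h' | h'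
    · exact h'
    · exact absurd h' h.2
  · intro h
    push_neg
    refine ⟨?_, ?_⟩
    · rintro rfl; exact lt_irrefl _ _ h
    · exact lt_asymm h𝓛 h

/-- `{x | x ⊲ a}` is open in the topology generated by `𝓛 ∪ 𝓡`. -/
lemma open_lt_left (a : X) :
    IsOpen[TopologicalSpace.generateFrom (𝓛 ∪ 𝓡)] {x | NestLT 𝓛 x a} := by
  letI := TopologicalSpace.generateFrom (𝓛 ∪ 𝓡)
  have h : {x | NestLT 𝓛 x a} = ⋃₀ {L | L ∈ 𝓛 ∧ a ∉ L} := by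
    ext x
    simp only [Set.mem_setOf_eq, Set.mem_sUnion, NestLT]
    constructor
    · rintro ⟨L, hL, hx, ha⟩; exact ⟨L, ⟨hL, ha⟩, hx⟩
    · rintro ⟨L, ⟨hL, ha⟩, hx⟩; exact ⟨L, hL, hx, ha⟩
  rw [h]
  exact isOpen_sUnion fun L hL => isOpen_generateFrom_of_mem (Or.inl hL.1)

/-- `{x | a ⊲ x}` is open in the topology generated by `𝓛 ∪ 𝓡`. -/
lemma open_lt_right (h𝓛 : IsNest 𝓛) (h𝓡 : IsNest 𝓡) (hT1 : T1Sep (𝓛 ∪ 𝓡)) (a : X) :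
    IsOpen[TopologicalSpace.generateFrom (𝓛 ∪ 𝓡)] {x | NestLT 𝓛 a x} := by
  letI := TopologicalSpace.generateFrom (𝓛 ∪ 𝓡)
  have h : {x | NestLT 𝓛 a x} = ⋃₀ {R | R ∈ 𝓡 ∧ R ⊆ {x | NestLT 𝓛 a x}} := by
    apply Set.Subset.antisymm
    · intro z hz
      have hza : z ≠ a := by rintro rfl; exact lt_irrefl 𝓛 z hz
      obtain ⟨S, hS, S', hS', ⟨hzS, haS⟩, _⟩ := hT1 z a hza
      rcases hS with h𝓛S | h𝓡S
      · exact absurd ⟨S, h𝓛S, hzS, haS⟩ (lt_asymm h𝓛 hz)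
      · refine ⟨S, ⟨h𝓡S, ?_⟩, hzS⟩
        intro w hw
        by_contra hnaw
        have hwa : w ≠ a := by rintro rfl; exact haS hw
        obtain ⟨T, hT, T', hT', ⟨hwT, haT⟩, haT', hwT'⟩ := hT1 w a hwa
        rcases hT' with h𝓛T' | h𝓡T'
        · exact hnaw ⟨T', h𝓛T', haT', hwT'⟩
        · rcases h𝓡 T' h𝓡T' S h𝓡S with hsub | hsub
          · exact haS (hsub haT')
          · exact hwT' (hsub hw)
    · intro z hz
      obtain ⟨R, ⟨_, hRS⟩, hzR⟩ := hz
      exact hRS hzR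
  rw [h]
  exact isOpen_sUnion fun R hR => isOpen_generateFrom_of_mem (Or.inr hR.1)

/-- Every member of `𝓛` is open in the `⊲`-order topology. -/
lemma open_mem_left (h𝓛 : IsNest 𝓛) (hi𝓛 : Interlocking 𝓛) {L : Set X} (hL : L ∈ 𝓛) :
    IsOpen[orderTopologyOf (NestLT 𝓛)] L := by
  letI := orderTopologyOf (NestLT 𝓛)
  rw [isOpen_iff_forall_mem_open]
  intro x hx
  by_cases hc : ⋂₀ {N | N ∈ 𝓛 ∧ L ⊆ N ∧ L ≠ N} ⊆ L
  · have hLK : L = ⋂₀ {N | N ∈ 𝓛 ∧ L ⊆ N ∧ L ≠ N} :=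
      (Set.subset_sInter fun N hN => hN.2.1).antisymm hc
    have hU := hi𝓛 L hL hLK
    rw [hU] at hx
    obtain ⟨N, ⟨hN𝓛, hNL, hne⟩, hxN⟩ := hx
    have hb : ∃ b ∈ L, b ∉ N := by
      by_contra hcon
      push_neg at hcon
      exact hne (hNL.antisymm hcon).symm
    obtain ⟨b, hbL, hbN⟩ := hb
    refine ⟨{y | NestLT 𝓛 y b}, ?_, ?_, ⟨N, hN𝓛, hxN, hbN⟩⟩
    · rintro y ⟨M, hM, hyM, hbM⟩
      rcases h𝓛 M hM L hL with hsub | hsub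
      · exact hsub hyM
      · exact absurd (hsub hbL) hbM
    · exact isOpen_generateFrom_of_mem (Or.inl ⟨b, rfl⟩)
  · obtain ⟨a, haK, haL⟩ := Set.not_subset.mp hc
    refine ⟨{y | NestLT 𝓛 y a}, ?_, ?_, ⟨L, hL, hx, haL⟩⟩
    · rintro y ⟨M, hM, hyM, haM⟩
      rcases h𝓛 M hM L hL with hsub | hsub
      · exact hsub hyM
      · by_cases heq : L = M
        · exact heq ▸ hyM
        · exact absurd (haK M ⟨hM, hsub, heq⟩) haM
    · exact isOpen_generateFrom_of_mem (Or.inl ⟨a, rfl⟩)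

/-- Every member of `𝓡` is open in the `⊲_𝓛`-order topology. -/
lemma open_mem_right (h𝓛 : IsNest 𝓛) (h𝓡 : IsNest 𝓡) (hi𝓡 : Interlocking 𝓡)
    (hT1 : T1Sep (𝓛 ∪ 𝓡)) {R : Set X} (hR : R ∈ 𝓡) :
    IsOpen[orderTopologyOf (NestLT 𝓛)] R := by
  letI := orderTopologyOf (NestLT 𝓛)
  rw [isOpen_iff_forall_mem_open]
  intro x hx
  -- every point outside `R` is `⊲ x`
  have hA : ∀ y, y ∉ R → NestLT 𝓛 y x := by
    intro y hy
    have hne : y ≠ x := by rintro rfl; exact hy hx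
    obtain ⟨S, hS, _S', _hS', ⟨hyS, hxS⟩, _⟩ := hT1 y x hne
    rcases hS with h | h
    · exact ⟨S, h, hyS, hxS⟩
    · rcases h𝓡 S h R hR with hsub | hsub
      · exact absurd (hsub hyS) hy
      · exact absurd (hsub hx) hxS
  suffices hgoal : ∃ a, NestLT 𝓛 a x ∧ ∀ y, y ∉ R → ¬ NestLT 𝓛 a y by
    obtain ⟨a, hax, hay⟩ := hgoal
    refine ⟨{z | NestLT 𝓛 a z}, ?_, isOpen_generateFrom_of_mem (Or.inr ⟨a, rfl⟩), hax⟩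
    intro z hz
    by_contra hzR
    exact hay z hzR hz
  by_cases h1 : ∃ a ∈ R, NestLT 𝓛 a x
  · obtain ⟨a, haR, hax⟩ := h1
    refine ⟨a, hax, fun y hy hLT => ?_⟩
    have hne : y ≠ a := by rintro rfl; exact hy haR
    obtain ⟨S, hS, _S', _hS', ⟨hyS, haS⟩, _⟩ := hT1 y a hne
    rcases hS with h | h
    · exact lt_asymm h𝓛 hLT ⟨S, h, hyS, haS⟩
    · rcases h𝓡 S h R hR with hsub | hsub
      · exact hy (hsub hyS)
      · exact haS (hsub haR)
  · push_neg at h1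
    by_cases h2 : ∃ a, NestLT 𝓛 a x ∧ ∀ y, NestLT 𝓛 y x → ¬ NestLT 𝓛 a y
    · obtain ⟨a, hax, hmax⟩ := h2
      exact ⟨a, hax, fun y hy => hmax y (hA y hy)⟩
    · exfalso
      push_neg at h2
      by_cases hc : ⋂₀ {N | N ∈ 𝓡 ∧ R ⊆ N ∧ R ≠ N} ⊆ R
      · have hReq : R = ⋂₀ {N | N ∈ 𝓡 ∧ R ⊆ N ∧ R ≠ N} :=
          (Set.subset_sInter fun N hN => hN.2.1).antisymm hc
        have hU := hi𝓡 R hR hReq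
        have hx' := hx
        rw [hU] at hx'
        obtain ⟨N, ⟨hN𝓡, hNR, hneN⟩, hxN⟩ := hx'
        have hw : ∃ w ∈ R, w ∉ N := by
          by_contra hcon
          push_neg at hcon
          exact hneN (hNR.antisymm hcon).symm
        obtain ⟨w, hwR, hwN⟩ := hw
        have hnewx : w ≠ x := by rintro rfl; exact hwN hxN
        obtain ⟨S, hS, _S', _hS', ⟨hwS, hxS⟩, _⟩ := hT1 w x hnewx
        rcases hS with h | h
        · exact h1 w hwR ⟨S, h, hwS, hxS⟩
        · rcases h𝓡 S h N hN𝓡 with hsub | hsub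
          · exact hwN (hsub hwS)
          · exact hxS (hsub hxN)
      · obtain ⟨z, hzK, hzR⟩ := Set.not_subset.mp hc
        have hzx := hA z hzR
        obtain ⟨y, hyx, hzy⟩ := h2 z hzx
        have hyR : y ∉ R := fun hyR => h1 y hyR hyx
        have hne : y ≠ z := by rintro rfl; exact lt_irrefl 𝓛 y hzy
        obtain ⟨S, hS, _S', _hS', ⟨hyS, hzS⟩, _⟩ := hT1 y z hne
        rcases hS with h | h
        · exact lt_asymm h𝓛 hzy ⟨S, h, hyS, hzS⟩
        · rcases h𝓡 S h R hR with hsub | hsub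
          · exact hyR (hsub hyS)
          · have hneRS : R ≠ S := by rintro rfl; exact hyR hyS
            exact hzS (hzK S ⟨h, hsub, hneRS⟩)

/-- The key equality: the `⊲`-order topology is generated by `𝓛 ∪ 𝓡`. -/
lemma order_eq_generateFrom (h𝓛 : IsNest 𝓛) (h𝓡 : IsNest 𝓡)
    (hi𝓛 : Interlocking 𝓛) (hi𝓡 : Interlocking 𝓡) (hT1 : T1Sep (𝓛 ∪ 𝓡)) :
    orderTopologyOf (NestLT 𝓛) = TopologicalSpace.generateFrom (𝓛 ∪ 𝓡) := by
  apply le_antisymm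
  · apply le_generateFrom
    rintro S (hS | hS)
    · exact open_mem_left h𝓛 hi𝓛 hS
    · exact open_mem_right h𝓛 h𝓡 hi𝓡 hT1 hS
  · apply le_generateFrom
    rintro S (⟨a, rfl⟩ | ⟨a, rfl⟩)
    · exact open_lt_left a
    · exact open_lt_right h𝓛 h𝓡 hT1 a

/-- Generators of the `⊲`-order topology are open in the `⊲`-interval topology. -/
lemma interval_lt_le_order_lt (h𝓛 : IsNest 𝓛) (h𝓡 : IsNest 𝓡) (hT1 : T1Sep (𝓛 ∪ 𝓡)) :
    intervalTopologyOf (NestLT 𝓛) ≤ orderTopologyOf (NestLT 𝓛) := by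
  apply le_generateFrom
  letI := intervalTopologyOf (NestLT 𝓛)
  rintro S (⟨a, rfl⟩ | ⟨a, rfl⟩)
  · have h : {x | NestLT 𝓛 x a} = ⋃ b ∈ {b | NestLT 𝓛 b a}, {x | NestLT 𝓛 b x}ᶜ := by
      ext x
      simp only [Set.mem_setOf_eq, Set.mem_iUnion, Set.mem_compl_iff]
      constructor
      · intro hx
        exact ⟨x, hx, lt_irrefl 𝓛 x⟩
      · rintro ⟨b, hba, hnbx⟩
        by_cases heq : x = b
        · exact heq ▸ hba
        rcases lt_trich h𝓡 hT1 heq with h' | h'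
        · exact lt_trans h𝓛 h' hba
        · exact absurd h' hnbx
    rw [h]
    exact isOpen_biUnion fun b _ => isOpen_generateFrom_of_mem (Or.inr ⟨b, rfl⟩)
  · have h : {x | NestLT 𝓛 a x} = ⋃ b ∈ {b | NestLT 𝓛 a b}, {x | NestLT 𝓛 x b}ᶜ := by
      ext x
      simp only [Set.mem_setOf_eq, Set.mem_iUnion, Set.mem_compl_iff]
      constructor
      · intro hx
        exact ⟨x, hx, lt_irrefl 𝓛 x⟩
      · rintro ⟨b, hab, hnxb⟩
        by_cases heq : x = b
        · exact heq ▸ hab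
        rcases lt_trich h𝓡 hT1 heq with h' | h'
        · exact absurd h' hnxb
        · exact lt_trans h𝓛 hab h'
    rw [h]
    exact isOpen_biUnion fun b _ => isOpen_generateFrom_of_mem (Or.inl ⟨b, rfl⟩)

/-- The `⊴`-interval topology coincides with the `⊲`-order topology. -/
lemma interval_le_eq_order_lt (h𝓛 : IsNest 𝓛) (h𝓡 : IsNest 𝓡) (hT1 : T1Sep (𝓛 ∪ 𝓡)) :
    intervalTopologyOf (NestLE 𝓛) = orderTopologyOf (NestLT 𝓛) := by
  unfold intervalTopologyOf orderTopologyOf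
  congr 1
  ext S
  simp only [Set.mem_union, Set.mem_setOf_eq]
  constructor
  · rintro (⟨a, rfl⟩ | ⟨a, rfl⟩)
    · exact Or.inr ⟨a, (compl_le_left h𝓛 h𝓡 hT1 a)⟩
    · exact Or.inl ⟨a, (compl_le_right h𝓛 h𝓡 hT1 a)⟩
  · rintro (⟨a, rfl⟩ | ⟨a, rfl⟩)
    · exact Or.inr ⟨a, (compl_le_right h𝓛 h𝓡 hT1 a).symm⟩
    · exact Or.inl ⟨a, (compl_le_left h𝓛 h𝓡 hT1 a).symm⟩

/-- The `⊲`-interval topology coincides with the `⊴`-order topology. -/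
lemma interval_lt_eq_order_le (h𝓛 : IsNest 𝓛) (h𝓡 : IsNest 𝓡) (hT1 : T1Sep (𝓛 ∪ 𝓡)) :
    intervalTopologyOf (NestLT 𝓛) = orderTopologyOf (NestLE 𝓛) := by
  have e1 : ∀ a : X, {x | NestLT 𝓛 x a}ᶜ = {x | NestLE 𝓛 a x} := by
    intro a
    rw [← compl_le_right h𝓛 h𝓡 hT1 a, compl_compl]
  have e2 : ∀ a : X, {x | NestLT 𝓛 a x}ᶜ = {x | NestLE 𝓛 x a} := by
    intro a
    rw [← compl_le_left h𝓛 h𝓡 hT1 a, compl_compl]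
  unfold intervalTopologyOf orderTopologyOf
  congr 1
  ext S
  simp only [Set.mem_union, Set.mem_setOf_eq]
  constructor
  · rintro (⟨a, rfl⟩ | ⟨a, rfl⟩)
    · exact Or.inr ⟨a, e1 a⟩
    · exact Or.inl ⟨a, e2 a⟩
  · rintro (⟨a, rfl⟩ | ⟨a, rfl⟩)
    · exact Or.inr ⟨a, (e2 a).symm⟩
    · exact Or.inl ⟨a, (e1 a).symm⟩

end NestAux

theorem topologies_comparison_interlocking {X : Type*} (𝓛 𝓡 : Set (Set X))
    (h𝓛 : IsNest 𝓛) (h𝓡 : IsNest 𝓡)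
    (hi𝓛 : Interlocking 𝓛) (hi𝓡 : Interlocking 𝓡)
    (hT1 : T1Sep (𝓛 ∪ 𝓡)) :
    orderTopologyOf (NestLT 𝓛) = TopologicalSpace.generateFrom (𝓛 ∪ 𝓡) ∧
    TopologicalSpace.generateFrom (𝓛 ∪ 𝓡) = intervalTopologyOf (NestLE 𝓛) ∧
    (∀ U : Set X, IsOpen[intervalTopologyOf (NestLE 𝓛)] U →
      IsOpen[intervalTopologyOf (NestLT 𝓛)] U) ∧
    intervalTopologyOf (NestLT 𝓛) = orderTopologyOf (NestLE 𝓛) := by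
  have key := NestAux.order_eq_generateFrom h𝓛 h𝓡 hi𝓛 hi𝓡 hT1
  have hIL := NestAux.interval_le_eq_order_lt h𝓛 h𝓡 hT1
  refine ⟨key, ?_, ?_, NestAux.interval_lt_eq_order_le h𝓛 h𝓡 hT1⟩
  · rw [hIL, key]
  · intro U hU
    rw [hIL] at hU
    exact hU.mono (NestAux.interval_lt_le_order_lt h𝓛 h𝓡 hT1)
end

section
/- Let X be a set and let 𝓛 and 𝓡 be two nests on X whose union T₁-separates X. Then the ⊲_𝓛-order topology equals the ⊴_𝓛-interval topology; this topology is contained in the topology generated by 𝓛 ∪ 𝓡 as a subbasis, which in turn is contained in the ⊲_𝓛-interval topology; and the ⊲_𝓛-interval topology equals the ⊴_𝓛-order topology. -/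
open Topology

section Helpers

variable {X : Type*} {𝓛 𝓡 : Set (Set X)}

lemma nestLT_irrefl (𝓛 : Set (Set X)) (x : X) : ¬ NestLT 𝓛 x x := by
  rintro ⟨L, _, hx, hx'⟩; exact hx' hx

lemma nestLT_asymm (h𝓛 : IsNest 𝓛) {x y : X} (h : NestLT 𝓛 x y) : ¬ NestLT 𝓛 y x := by
  rintro ⟨M, hM, hyM, hxM⟩
  obtain ⟨L, hL, hxL, hyL⟩ := h
  rcases h𝓛 L hL M hM with hs | hs
  · exact hxM (hs hxL)
  · exact hyL (hs hyM)

/-- Trichotomy: a consequence of T₁-separation by the union of two nests. -/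
lemma nest_tri (h𝓡 : IsNest 𝓡) (hT1 : T1Sep (𝓛 ∪ 𝓡)) {x y : X} (h : x ≠ y) :
    NestLT 𝓛 x y ∨ NestLT 𝓛 y x := by
  obtain ⟨L, hL, L', hL', ⟨hxL, hyL⟩, hyL', hxL'⟩ := hT1 x y h
  rcases hL with h1 | h1
  · exact Or.inl ⟨L, h1, hxL, hyL⟩
  rcases hL' with h2 | h2
  · exact Or.inr ⟨L', h2, hyL', hxL'⟩
  rcases h𝓡 L h1 L' h2 with hs | hs
  · exact absurd (hs hxL) hxL'
  · exact absurd (hs hyL') hyL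

lemma nest_rev (h𝓛 : IsNest 𝓛) (hT1 : T1Sep (𝓛 ∪ 𝓡)) {x y : X}
    (h : NestLT 𝓛 x y) : NestLT 𝓡 y x := by
  have hne : y ≠ x := by rintro rfl; exact nestLT_irrefl _ _ h
  obtain ⟨L, hL, _, _, ⟨hyL, hxL⟩, _⟩ := hT1 y x hne
  rcases hL with h1 | h1
  · exact absurd ⟨L, h1, hyL, hxL⟩ (nestLT_asymm h𝓛 h)
  · exact ⟨L, h1, hyL, hxL⟩

lemma nest_rev' (h𝓡 : IsNest 𝓡) (hT1 : T1Sep (𝓛 ∪ 𝓡)) {x y : X}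
    (h : NestLT 𝓡 x y) : NestLT 𝓛 y x := by
  have hne : y ≠ x := by rintro rfl; exact nestLT_irrefl _ _ h
  obtain ⟨L, hL, _, _, ⟨hyL, hxL⟩, _⟩ := hT1 y x hne
  rcases hL with h1 | h1
  · exact ⟨L, h1, hyL, hxL⟩
  · exact absurd ⟨L, h1, hyL, hxL⟩ (nestLT_asymm h𝓡 h)

lemma compl_le_lt (h𝓛 : IsNest 𝓛) (h𝓡 : IsNest 𝓡) (hT1 : T1Sep (𝓛 ∪ 𝓡)) (a : X) :
    {x | NestLE 𝓛 x a}ᶜ = {x | NestLT 𝓛 a x} := by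
  ext x
  simp only [Set.mem_compl_iff, Set.mem_setOf_eq, NestLE, not_or]
  constructor
  · rintro ⟨hne, hlt⟩
    rcases nest_tri h𝓡 hT1 hne with h | h
    · exact absurd h hlt
    · exact h
  · intro h
    refine ⟨?_, nestLT_asymm h𝓛 h⟩
    rintro rfl; exact nestLT_irrefl _ _ h

lemma compl_le_lt' (h𝓛 : IsNest 𝓛) (h𝓡 : IsNest 𝓡) (hT1 : T1Sep (𝓛 ∪ 𝓡)) (a : X) :
    {x | NestLE 𝓛 a x}ᶜ = {x | NestLT 𝓛 x a} := by
  ext x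
  simp only [Set.mem_compl_iff, Set.mem_setOf_eq, NestLE, not_or]
  constructor
  · rintro ⟨hne, hlt⟩
    rcases nest_tri h𝓡 hT1 (fun h' => hne h'.symm) with h | h
    · exact h
    · exact absurd h hlt
  · intro h
    refine ⟨?_, nestLT_asymm h𝓛 h⟩
    rintro rfl; exact nestLT_irrefl _ _ h

lemma compl_lt_le (h𝓛 : IsNest 𝓛) (h𝓡 : IsNest 𝓡) (hT1 : T1Sep (𝓛 ∪ 𝓡)) (a : X) :
    {x | NestLT 𝓛 x a}ᶜ = {x | NestLE 𝓛 a x} := by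
  ext x
  simp only [Set.mem_compl_iff, Set.mem_setOf_eq, NestLE]
  constructor
  · intro h
    by_cases hax : a = x
    · exact Or.inl hax
    rcases nest_tri h𝓡 hT1 hax with h' | h'
    · exact Or.inr h'
    · exact absurd h' h
  · rintro (rfl | h)
    · exact nestLT_irrefl _ _
    · exact nestLT_asymm h𝓛 h

lemma compl_lt_le' (h𝓛 : IsNest 𝓛) (h𝓡 : IsNest 𝓡) (hT1 : T1Sep (𝓛 ∪ 𝓡)) (a : X) :
    {x | NestLT 𝓛 a x}ᶜ = {x | NestLE 𝓛 x a} := by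
  ext x
  simp only [Set.mem_compl_iff, Set.mem_setOf_eq, NestLE]
  constructor
  · intro h
    by_cases hax : x = a
    · exact Or.inl hax
    rcases nest_tri h𝓡 hT1 hax with h' | h'
    · exact Or.inr h'
    · exact absurd h' h
  · rintro (rfl | h)
    · exact nestLT_irrefl _ _
    · exact nestLT_asymm h𝓛 h

end Helpers

theorem topologies_comparison {X : Type*} (𝓛 𝓡 : Set (Set X))
    (h𝓛 : IsNest 𝓛) (h𝓡 : IsNest 𝓡) (hT1 : T1Sep (𝓛 ∪ 𝓡)) :
    orderTopologyOf (NestLT 𝓛) = intervalTopologyOf (NestLE 𝓛) ∧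
    (∀ U : Set X, IsOpen[orderTopologyOf (NestLT 𝓛)] U →
      IsOpen[TopologicalSpace.generateFrom (𝓛 ∪ 𝓡)] U) ∧
    (∀ U : Set X, IsOpen[TopologicalSpace.generateFrom (𝓛 ∪ 𝓡)] U →
      IsOpen[intervalTopologyOf (NestLT 𝓛)] U) ∧
    intervalTopologyOf (NestLT 𝓛) = orderTopologyOf (NestLE 𝓛) := by
  -- Part 1
  have e1 : orderTopologyOf (NestLT 𝓛) = intervalTopologyOf (NestLE 𝓛) := by
    rw [orderTopologyOf, intervalTopologyOf]
    congr 1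
    simp only [compl_le_lt h𝓛 h𝓡 hT1, compl_le_lt' h𝓛 h𝓡 hT1]
    exact Set.union_comm _ _
  -- Part 4
  have e4 : intervalTopologyOf (NestLT 𝓛) = orderTopologyOf (NestLE 𝓛) := by
    rw [orderTopologyOf, intervalTopologyOf]
    congr 1
    simp only [compl_lt_le h𝓛 h𝓡 hT1, compl_lt_le' h𝓛 h𝓡 hT1]
    exact Set.union_comm _ _
  -- Part 2
  have h2 : TopologicalSpace.generateFrom (𝓛 ∪ 𝓡) ≤ orderTopologyOf (NestLT 𝓛) := by
    rw [orderTopologyOf]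
    apply le_generateFrom
    rintro S (⟨a, rfl⟩ | ⟨a, rfl⟩)
    · have hrep : {x | NestLT 𝓛 x a} = ⋃₀ {L | L ∈ 𝓛 ∧ a ∉ L} := by
        ext x
        constructor
        · rintro ⟨L, hL, hx, ha⟩; exact ⟨L, ⟨hL, ha⟩, hx⟩
        · rintro ⟨L, ⟨hL, ha⟩, hx⟩; exact ⟨L, hL, hx, ha⟩
      rw [hrep]
      exact TopologicalSpace.GenerateOpen.sUnion _ fun L hL =>
        TopologicalSpace.GenerateOpen.basic _ (Or.inl hL.1)
    · have hrep : {x | NestLT 𝓛 a x} =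
          ⋃₀ {P | P ∈ 𝓡 ∧ P ⊆ {x | NestLT 𝓛 a x}} := by
        apply Set.Subset.antisymm
        · intro x hx
          have hne : x ≠ a := by rintro rfl; exact nestLT_irrefl _ _ hx
          obtain ⟨P, hP, _, _, ⟨hxP, haP⟩, _⟩ := hT1 x a hne
          rcases hP with hP | hP
          · exact absurd ⟨P, hP, hxP, haP⟩ (nestLT_asymm h𝓛 hx)
          · refine ⟨P, ⟨hP, ?_⟩, hxP⟩
            intro y hyP
            have hya : y ≠ a := by rintro rfl; exact haP hyP
            rcases nest_tri h𝓡 hT1 hya with h | h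
            · -- y ⊲ a : then a ⊲_𝓡 y, contradicting the nest structure of 𝓡
              obtain ⟨M, hM, haM, hyM⟩ := nest_rev h𝓛 hT1 h
              rcases h𝓡 M hM P hP with hs | hs
              · exact absurd (hs haM) haP
              · exact absurd (hs hyP) hyM
            · exact h
        · rintro x ⟨P, ⟨_, hsub⟩, hxP⟩; exact hsub hxP
      rw [hrep]
      exact TopologicalSpace.GenerateOpen.sUnion _ fun P hP =>
        TopologicalSpace.GenerateOpen.basic _ (Or.inr hP.1)
  -- Part 3
  have h3 : intervalTopologyOf (NestLT 𝓛) ≤ TopologicalSpace.generateFrom (𝓛 ∪ 𝓡) := by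
    apply le_generateFrom
    rintro S (hS | hS)
    · -- S ∈ 𝓛 : union of closed lower rays
      have hrep : S = ⋃₀ {T | ∃ b ∈ S, T = {y | NestLT 𝓛 b y}ᶜ} := by
        apply Set.Subset.antisymm
        · intro x hx
          exact ⟨{y | NestLT 𝓛 x y}ᶜ, ⟨x, hx, rfl⟩, nestLT_irrefl 𝓛 x⟩
        · rintro x ⟨T, ⟨b, hbS, rfl⟩, hxT⟩
          by_contra hxS
          exact hxT ⟨S, hS, hbS, hxS⟩
      rw [hrep]
      exact TopologicalSpace.GenerateOpen.sUnion _ fun T hT => by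
        obtain ⟨b, _, rfl⟩ := hT
        exact TopologicalSpace.GenerateOpen.basic _ (Or.inr ⟨b, rfl⟩)
    · -- S ∈ 𝓡 : union of closed upper rays
      have hrep : S = ⋃₀ {T | ∃ b ∈ S, T = {y | NestLT 𝓛 y b}ᶜ} := by
        apply Set.Subset.antisymm
        · intro x hx
          exact ⟨{y | NestLT 𝓛 y x}ᶜ, ⟨x, hx, rfl⟩, nestLT_irrefl 𝓛 x⟩
        · rintro x ⟨T, ⟨b, hbS, rfl⟩, hxT⟩
          by_contra hxS
          exact hxT (nest_rev' h𝓡 hT1 ⟨S, hS, hbS, hxS⟩)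
      rw [hrep]
      exact TopologicalSpace.GenerateOpen.sUnion _ fun T hT => by
        obtain ⟨b, _, rfl⟩ := hT
        exact TopologicalSpace.GenerateOpen.basic _ (Or.inl ⟨b, rfl⟩)
  exact ⟨e1, fun U hU => hU.mono h2, fun U hU => hU.mono h3, e4⟩
end

section
/- A topological space (X, 𝒯) is a LOTS if and only if there exists a nest 𝓛 on X that is T₀-separating and interlocking and such that 𝒯 equals the ⊴_𝓛-interval topology on X. -/
/-!
A nest `𝓛` that T₀-separates `X` makes `⊲_𝓛` a strict total order whose reflexive closure is
`⊴_𝓛`. For a strict total order the complement of `{x | x ⊴ a}` is `{x | a ⊲ x}` (and dually),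
so the `⊴`-interval topology has the same subbasis as the `⊲`-order topology. Conversely, the
initial rays `Iio a` of a linear order form such a nest, with `⊲` equal to `<`.
-/

section StrictTotalOrder
variable {X : Type*} {r : X → X → Prop} [IsStrictTotalOrder X r]

theorem not_eq_or_rel_iff {x y : X} : ¬(x = y ∨ r x y) ↔ r y x := by
  refine ⟨fun h => ?_, fun hyx => ?_⟩
  · rcases trichotomous_of r x y with hxy | rfl | hyx
    exacts [absurd (Or.inr hxy) h, absurd (Or.inl rfl) h, hyx]
  · rintro (rfl | hxy)
    exacts [irrefl_of r x hyx, asymm_of r hxy hyx]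

theorem intervalTopologyOf_eq_orderTopologyOf :
    intervalTopologyOf (fun x y => x = y ∨ r x y) = orderTopologyOf r := by
  simp only [intervalTopologyOf, orderTopologyOf, Set.compl_ofPred, not_eq_or_rel_iff,
    Set.union_comm]

end StrictTotalOrder

section Nest
variable {X : Type*} {𝓛 : Set (Set X)}

theorem isStrictTotalOrder_nestLT (hN : IsNest 𝓛) (hT : T0Sep 𝓛) :
    IsStrictTotalOrder X (NestLT 𝓛) where
  irrefl _ := fun ⟨_, _, hxL, hxL'⟩ => hxL' hxL
  trans x y z := by
    rintro ⟨L, hL, hxL, hyL⟩ ⟨M, hM, hyM, hzM⟩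
    rcases hN L hL M hM with hLM | hML
    exacts [⟨M, hM, hLM hxL, hzM⟩, absurd (hML hyM) hyL]
  trichotomous x y hxy hyx := by
    by_contra hne
    obtain ⟨L, hL, h | h⟩ := hT x y hne
    exacts [hxy ⟨L, hL, h⟩, hyx ⟨L, hL, h⟩]

theorem intervalTopologyOf_nestLE (hN : IsNest 𝓛) (hT : T0Sep 𝓛) :
    intervalTopologyOf (NestLE 𝓛) = orderTopologyOf (NestLT 𝓛) :=
  have := isStrictTotalOrder_nestLT hN hT
  intervalTopologyOf_eq_orderTopologyOf

end Nest

section Iio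
variable {X : Type*} [LinearOrder X]

theorem nestLT_range_Iio : NestLT (Set.range (Set.Iio : X → Set X)) = (· < ·) := by
  ext x y
  refine ⟨?_, fun hxy => ⟨Set.Iio y, ⟨y, rfl⟩, hxy, lt_irrefl y⟩⟩
  rintro ⟨_, ⟨a, rfl⟩, hxa, hya⟩
  exact hxa.trans_le (not_lt.mp hya)

theorem isNest_range_Iio : IsNest (Set.range (Set.Iio : X → Set X)) := by
  rintro _ ⟨a, rfl⟩ _ ⟨b, rfl⟩
  exact (le_total a b).imp Set.Iio_subset_Iio Set.Iio_subset_Iio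

theorem t0Sep_range_Iio : T0Sep (Set.range (Set.Iio : X → Set X)) := by
  intro x y hxy
  rcases hxy.lt_or_gt with hxy | hyx
  exacts [⟨Set.Iio y, ⟨y, rfl⟩, .inl ⟨hxy, lt_irrefl y⟩⟩,
    ⟨Set.Iio x, ⟨x, rfl⟩, .inr ⟨hyx, lt_irrefl x⟩⟩]

/-- The hypothesis of interlocking never holds here: `a` lies in every strictly larger ray
`Iio c`, but not in `Iio a`. -/
theorem interlocking_range_Iio_s12 : Interlocking (Set.range (Set.Iio : X → Set X)) := by
  rintro _ ⟨a, rfl⟩ h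
  have : a ∈ ⋂₀ {N | N ∈ Set.range Set.Iio ∧ Set.Iio a ⊆ N ∧ Set.Iio a ≠ N} := by
    rintro _ ⟨⟨c, rfl⟩, hac, hne⟩
    exact (Set.Iio_subset_Iio_iff.mp hac).lt_of_ne (fun hca => hne (congrArg Set.Iio hca))
  rw [← h] at this
  exact absurd this (lt_irrefl a)

end Iio

theorem isLOTS_iff_intervalTopology {X : Type*} (t : TopologicalSpace X) :
    IsLOTS t ↔
      ∃ 𝓛 : Set (Set X), IsNest 𝓛 ∧ T0Sep 𝓛 ∧ Interlocking 𝓛 ∧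
        t = intervalTopologyOf (NestLE 𝓛) := by
  constructor
  · rintro ⟨_, rfl⟩
    refine ⟨Set.range Set.Iio, isNest_range_Iio, t0Sep_range_Iio, interlocking_range_Iio_s12, ?_⟩
    rw [intervalTopologyOf_nestLE isNest_range_Iio t0Sep_range_Iio, nestLT_range_Iio]
  · rintro ⟨𝓛, hN, hT, -, rfl⟩
    have := isStrictTotalOrder_nestLT hN hT
    have := Classical.decRel (NestLT 𝓛)
    exact ⟨linearOrderOfSTO (NestLT 𝓛), intervalTopologyOf_nestLE hN hT⟩
end

section
/- Let X be a set with a transitive relation < and let ≤ denote its reflexive closure (x ≤ y iff x = y or x < y). Then the lower topology 𝒯_l of ≤ equals the left-ray topology 𝒯_← of < if and only if Conditions 1 and 3 both hold, where Condition 1 states: for all x, y ∈ X with ¬(x ≤ y), there exist finitely many z₁, …, zₙ ∈ X such that y < zᵢ for every i, and for every w ∈ X, if w < zᵢ for every i then ¬(x ≤ w); and Condition 3 states: for all x, y ∈ X with y < x, there exist finitely many z₁, …, zₙ ∈ X such that ¬(zᵢ ≤ y) for every i, and for every w ∈ X, if ¬(zᵢ ≤ w) for every i then w < x. -/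
/-- The lower topology of a relation `le`: generated by the complements of the
up-sets `↑a = {y | le a y}`. -/
def lowerTopologyOf {X : Type*} (le : X → X → Prop) : TopologicalSpace X :=
  TopologicalSpace.generateFrom {S | ∃ a, S = {y | le a y}ᶜ}

/-- The left-ray topology of a relation `lt`: generated by the rays
`(←, a) = {x | lt x a}`. -/
def leftRayTopologyOf {X : Type*} (lt : X → X → Prop) : TopologicalSpace X :=
  TopologicalSpace.generateFrom {S | ∃ a, S = {x | lt x a}}

/-- Condition 1. -/
def Cond1 {X : Type*} (lt le : X → X → Prop) : Prop :=
  ∀ x y : X, ¬ le x y →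
    ∃ (n : ℕ) (z : Fin n → X), (∀ i, lt y (z i)) ∧
      ∀ w : X, (∀ i, lt w (z i)) → ¬ le x w

/-- Condition 3. -/
def Cond3 {X : Type*} (lt le : X → X → Prop) : Prop :=
  ∀ x y : X, lt y x →
    ∃ (n : ℕ) (z : Fin n → X), (∀ i, ¬ le (z i) y) ∧
      ∀ w : X, (∀ i, ¬ le (z i) w) → lt w x

open Topology in
lemma isOpen_genFrom_iff_finInter {X : Type*} (𝒮 : Set (Set X)) (u : Set X) :
    IsOpen[TopologicalSpace.generateFrom 𝒮] u ↔
    ∀ x ∈ u, ∃ (n : ℕ) (f : Fin n → Set X), (∀ i, f i ∈ 𝒮) ∧ (∀ i, x ∈ f i) ∧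
      (⋂ i, f i) ⊆ u := by
  letI t : TopologicalSpace X := TopologicalSpace.generateFrom 𝒮
  have hb := TopologicalSpace.isTopologicalBasis_of_subbasis (t := t) (s := 𝒮) rfl
  rw [hb.isOpen_iff]
  constructor
  · intro h x hx
    obtain ⟨v, ⟨g, ⟨hgfin, hgsub⟩, rfl⟩, hxv, hvu⟩ := h x hx
    haveI := hgfin.fintype
    refine ⟨Fintype.card g, fun i => ((Fintype.equivFin g).symm i : Set X),
      fun i => hgsub ((Fintype.equivFin g).symm i).2,
      fun i => hxv _ ((Fintype.equivFin g).symm i).2, fun w hw => ?_⟩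
    refine hvu fun s hs => ?_
    have := Set.mem_iInter.mp hw ((Fintype.equivFin g) ⟨s, hs⟩)
    simpa using this
  · intro h x hx
    obtain ⟨n, f, hf𝒮, hxf, hsub⟩ := h x hx
    refine ⟨⋂ i, f i, ⟨Set.range f, ⟨Set.finite_range f, Set.range_subset_iff.mpr hf𝒮⟩,
      Set.sInter_range f⟩, Set.mem_iInter.mpr hxf, hsub⟩

open Topology in
theorem lowerTop_eq_leftRayTop_iff {X : Type*} (lt : X → X → Prop)
    (htrans : ∀ x y z : X, lt x y → lt y z → lt x z)
    (le : X → X → Prop) (hle : ∀ x y : X, le x y ↔ x = y ∨ lt x y) :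
    lowerTopologyOf le = leftRayTopologyOf lt ↔ Cond1 lt le ∧ Cond3 lt le := by
  have hC1 : Cond1 lt le ↔
      ∀ s ∈ {S | ∃ a, S = {y | le a y}ᶜ}, IsOpen[leftRayTopologyOf lt] s := by
    constructor
    · rintro h s ⟨a, rfl⟩
      rw [leftRayTopologyOf, isOpen_genFrom_iff_finInter]
      intro y hy
      obtain ⟨n, z, h1, h2⟩ := h a y hy
      refine ⟨n, fun i => {x | lt x (z i)}, fun i => ⟨z i, rfl⟩, h1, fun w hw => ?_⟩
      exact h2 w (fun i => Set.mem_iInter.mp hw i)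
    · intro h x y hxy
      have h' := h _ ⟨x, rfl⟩
      rw [leftRayTopologyOf, isOpen_genFrom_iff_finInter] at h'
      obtain ⟨n, f, hf𝒮, hxf, hsub⟩ := h' y hxy
      choose z hz using hf𝒮
      refine ⟨n, z, fun i => ?_, fun w hw => hsub ?_⟩
      · have := hxf i; rw [hz i] at this; exact this
      · exact Set.mem_iInter.mpr fun i => by rw [hz i]; exact hw i
  have hC3 : Cond3 lt le ↔
      ∀ s ∈ {S | ∃ a, S = {x | lt x a}}, IsOpen[lowerTopologyOf le] s := by
    constructor
    · rintro h s ⟨a, rfl⟩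
      rw [lowerTopologyOf, isOpen_genFrom_iff_finInter]
      intro y hy
      obtain ⟨n, z, h1, h2⟩ := h a y hy
      refine ⟨n, fun i => {y | le (z i) y}ᶜ, fun i => ⟨z i, rfl⟩, h1, fun w hw => ?_⟩
      exact h2 w (fun i => Set.mem_iInter.mp hw i)
    · intro h x y hxy
      have h' := h _ ⟨x, rfl⟩
      rw [lowerTopologyOf, isOpen_genFrom_iff_finInter] at h'
      obtain ⟨n, f, hf𝒮, hxf, hsub⟩ := h' y hxy
      choose z hz using hf𝒮
      refine ⟨n, z, fun i => ?_, fun w hw => hsub ?_⟩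
      · have := hxf i; rw [hz i] at this; exact this
      · exact Set.mem_iInter.mpr fun i => by rw [hz i]; exact hw i
  constructor
  · intro h
    refine ⟨hC1.mpr fun s hs => ?_, hC3.mpr fun s hs => ?_⟩
    · rw [← h]; exact TopologicalSpace.isOpen_generateFrom_of_mem hs
    · rw [h]; exact TopologicalSpace.isOpen_generateFrom_of_mem hs
  · rintro ⟨h1, h3⟩
    apply le_antisymm
    · exact le_generateFrom (hC3.mp h3)
    · exact le_generateFrom (hC1.mp h1)
end

section
/- Let X be a set with a transitive relation < and let ≤ denote its reflexive closure (x ≤ y iff x = y or x < y). Then the upper topology 𝒯_U of ≤ equals the right-ray topology 𝒯_→ of < if and only if Conditions 2 and 4 both hold, where Condition 2 states: for all x, y ∈ X with ¬(y ≤ x), there exist finitely many z₁, …, zₙ ∈ X such that zᵢ < y for every i, and for every w ∈ X, if zᵢ < w for every i then ¬(w ≤ x); and Condition 4 states: for all x, y ∈ X with x < y, there exist finitely many z₁, …, zₙ ∈ X such that ¬(y ≤ zᵢ) for every i, and for every w ∈ X, if ¬(w ≤ zᵢ) for every i then x < w. -/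
/-- The upper topology of a relation `le`: generated by the complements of the
down-sets `↓a = {y | le y a}`. -/
def upperTopologyOf {X : Type*} (le : X → X → Prop) : TopologicalSpace X :=
  TopologicalSpace.generateFrom {S | ∃ a, S = {y | le y a}ᶜ}

/-- The right-ray topology of a relation `lt`: generated by the rays
`(a, →) = {x | lt a x}`. -/
def rightRayTopologyOf {X : Type*} (lt : X → X → Prop) : TopologicalSpace X :=
  TopologicalSpace.generateFrom {S | ∃ a, S = {x | lt a x}}

/-- Condition 2. -/
def Cond2 {X : Type*} (lt le : X → X → Prop) : Prop :=
  ∀ x y : X, ¬ le y x →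
    ∃ (n : ℕ) (z : Fin n → X), (∀ i, lt (z i) y) ∧
      ∀ w : X, (∀ i, lt (z i) w) → ¬ le w x

/-- Condition 4. -/
def Cond4 {X : Type*} (lt le : X → X → Prop) : Prop :=
  ∀ x y : X, lt x y →
    ∃ (n : ℕ) (z : Fin n → X), (∀ i, ¬ le y (z i)) ∧
      ∀ w : X, (∀ i, ¬ le w (z i)) → lt x w

open TopologicalSpace in
/-- Openness in a generated topology, characterized by finite families of
subbasic sets. -/
lemma isOpen_generateFrom_iff_finite_family {X : Type*} (s : Set (Set X)) (u : Set X) :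
    @IsOpen X (generateFrom s) u ↔
      ∀ y ∈ u, ∃ (n : ℕ) (v : Fin n → Set X), (∀ i, v i ∈ s) ∧ (∀ i, y ∈ v i) ∧
        ∀ w, (∀ i, w ∈ v i) → w ∈ u := by
  letI : TopologicalSpace X := generateFrom s
  rw [(isTopologicalBasis_of_subbasis (t := generateFrom s) rfl).isOpen_iff]
  constructor
  · intro h y hy
    obtain ⟨v, ⟨f, ⟨hfin, hfs⟩, rfl⟩, hyv, hvu⟩ := h y hy
    classical
    let F := hfin.toFinset
    let n := F.card
    let e : Fin n → F := F.equivFin.symm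
    have he : ∀ t ∈ f, ∃ i, (e i : Set X) = t := by
      intro t ht
      exact ⟨F.equivFin ⟨t, hfin.mem_toFinset.mpr ht⟩, by simp [e]⟩
    refine ⟨n, fun i => (e i : Set X), ?_, ?_, ?_⟩
    · intro i
      exact hfs (hfin.mem_toFinset.mp (e i).2)
    · intro i
      exact hyv _ (hfin.mem_toFinset.mp (e i).2)
    · intro w hw
      refine hvu ?_
      intro t ht
      obtain ⟨i, rfl⟩ := he t ht
      exact hw i
  · intro h y hy
    obtain ⟨n, v, hvs, hyv, hvu⟩ := h y hy
    refine ⟨⋂₀ Set.range v, ⟨Set.range v, ⟨Set.finite_range v, ?_⟩, rfl⟩, ?_, ?_⟩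
    · rintro t ⟨i, rfl⟩; exact hvs i
    · rintro t ⟨i, rfl⟩; exact hyv i
    · intro w hw
      exact hvu w fun i => hw _ ⟨i, rfl⟩

theorem upperTop_eq_rightRayTop_iff {X : Type*} (lt : X → X → Prop)
    (htrans : ∀ x y z : X, lt x y → lt y z → lt x z)
    (le : X → X → Prop) (hle : ∀ x y : X, le x y ↔ x = y ∨ lt x y) :
    upperTopologyOf le = rightRayTopologyOf lt ↔ Cond2 lt le ∧ Cond4 lt le := by
  have hC2 : (rightRayTopologyOf lt ≤ upperTopologyOf le) ↔ Cond2 lt le := by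
    rw [upperTopologyOf, TopologicalSpace.le_generateFrom_iff_subset_isOpen]
    constructor
    · rintro h x y hyx
      have hopen : @IsOpen X (rightRayTopologyOf lt) {w | le w x}ᶜ := h ⟨x, rfl⟩
      rw [rightRayTopologyOf, isOpen_generateFrom_iff_finite_family] at hopen
      obtain ⟨n, v, hvs, hyv, hvu⟩ := hopen y hyx
      classical
      choose a ha using hvs
      refine ⟨n, a, fun i => ?_, fun w hw => ?_⟩
      · have := hyv i; rw [ha i] at this; exact this
      · exact hvu w fun i => by rw [ha i]; exact hw i
    · rintro h S ⟨x, rfl⟩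
      show @IsOpen X (rightRayTopologyOf lt) {y | le y x}ᶜ
      rw [rightRayTopologyOf, isOpen_generateFrom_iff_finite_family]
      intro y hy
      obtain ⟨n, z, hz, hzw⟩ := h x y hy
      exact ⟨n, fun i => {w | lt (z i) w}, fun i => ⟨z i, rfl⟩, hz, hzw⟩
  have hC4 : (upperTopologyOf le ≤ rightRayTopologyOf lt) ↔ Cond4 lt le := by
    rw [rightRayTopologyOf, TopologicalSpace.le_generateFrom_iff_subset_isOpen]
    constructor
    · rintro h x y hxy
      have hopen : @IsOpen X (upperTopologyOf le) {w | lt x w} := h ⟨x, rfl⟩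
      rw [upperTopologyOf, isOpen_generateFrom_iff_finite_family] at hopen
      obtain ⟨n, v, hvs, hyv, hvu⟩ := hopen y hxy
      classical
      choose a ha using hvs
      refine ⟨n, a, fun i => ?_, fun w hw => ?_⟩
      · have := hyv i; rw [ha i] at this; exact this
      · exact hvu w fun i => by rw [ha i]; exact hw i
    · rintro h S ⟨x, rfl⟩
      show @IsOpen X (upperTopologyOf le) {w | lt x w}
      rw [upperTopologyOf, isOpen_generateFrom_iff_finite_family]
      intro y hy
      obtain ⟨n, z, hz, hzw⟩ := h x y hy
      exact ⟨n, fun i => {w | le w (z i)}ᶜ, fun i => ⟨z i, rfl⟩, hz, hzw⟩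
  rw [le_antisymm_iff]
  rw [hC2, hC4]
  tauto
end
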